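/- arXiv:1604.04904 — 2 statements merged into one kernel-verified Lean document; each statement's English description precedes it below -/
import Mathlib

section
/- Let h and k be coprime positive integers with h + k odd. Then B₁(h,k) = ((1-h)/(2k))·Σ_{j=1}^{k} tan(πh(2j-1)/(2k))·cot(π(2j-1)/(2k)), where any term whose cotangent factor vanishes (i.e. 2j-1 = k) is interpreted as 0. -/
open Filter Finset Real

/-- `B₁(h,k) = Σ_{j=1}^{k-1} (-1)^{j+⌊hj/k⌋}·⌊hj/k⌋` (as a real number). -/
noncomputable def B1 (h k : ℤ) : ℝ :=
  ∑ j ∈ Finset.Icc (1 : ℤ) (k - 1),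
    (-1 : ℝ) ^ (j + ⌊((h * j : ℤ) : ℝ) / (k : ℝ)⌋) * (⌊((h * j : ℤ) : ℝ) / (k : ℝ)⌋ : ℝ)

/-!
Put `θⱼ = π(2j+1)/(2k)` for `j < k` and `εₐ = (-1)^(a + ⌊ha/k⌋)`. Since
`⌊h(k-a)/k⌋ = h - 1 - ⌊ha/k⌋` for `0 < a < k` and `h + k` is odd, reflecting `a ↦ k - a` in `B₁`
gives `2 B₁(h,k) = (h - 1) Σ_{0<a<k} εₐ`.

On the trigonometric side, the finite Fourier expansion `k tan x = Σ_{a<2k} a (-1)ᵃ sin 2ax`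
(valid when `sin 2kx = 0`) turns `k Σⱼ tan(hθⱼ) cot θⱼ` into `Σ_{a<2k} a (-1)ᵃ S(ah)`, where
`S(n) = Σⱼ sin(2nθⱼ) cot θⱼ`. Telescoping in `n` against the orthogonality relations for
`cos(2nθⱼ)` shows that `S(n) = 0` if `k ∣ n` and `S(n) = k (-1)^⌊n/k⌋` otherwise, and pairing `a`
with `a + k` leaves `-k² Σ_{0<a<k} εₐ`.
-/

theorem sub_one_mul_sum_range_natCast_mul_pow {R : Type*} [CommRing R] (z : R) (N : ℕ) :
    (z - 1) * ∑ a ∈ range N, (a : R) * z ^ a = N * z ^ N - z * ∑ a ∈ range N, z ^ a := by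
  induction N with
  | zero => simp
  | succ N ih =>
    rw [sum_range_succ, sum_range_succ, mul_add, ih]
    push_cast
    ring

theorem sum_range_natCast_mul_pow_eq_div {K : Type*} [Field K] {z : K} {N : ℕ} (hzN : z ^ N = 1)
    (hz : z ≠ 1) : ∑ a ∈ range N, (a : K) * z ^ a = N / (z - 1) := by
  have hz' : z - 1 ≠ 0 := sub_ne_zero.mpr hz
  have hgeom : ∑ a ∈ range N, z ^ a = 0 := by
    simpa [hzN, hz'] using geom_sum_mul z N
  rw [eq_div_iff hz', mul_comm, sub_one_mul_sum_range_natCast_mul_pow, hzN, hgeom]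
  ring

open Complex in
theorem sum_range_mul_sin_two_mul {x : ℝ} (hx : Real.sin x ≠ 0) {N : ℕ}
    (hN : Real.sin (N * x) = 0) :
    ∑ a ∈ range N, a * Real.sin (2 * a * x) = -(N / 2 * Real.cot x) := by
  set z := exp (2 * I * x) with hz
  have hz_pow (a : ℕ) : z ^ a = exp ((2 * a * x : ℝ) * I) := by
    rw [← Complex.exp_nat_mul]
    push_cast
    ring_nf
  have hz1 : z ≠ 1 := by
    intro h1
    have hre := congrArg re h1
    rw [← pow_one z, hz_pow, exp_ofReal_mul_I_re, one_re, Nat.cast_one, mul_one,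
      Real.cos_two_mul, Real.cos_sq'] at hre
    exact hx (by nlinarith)
  have hzN : z ^ N = 1 := by
    rw [hz_pow, mul_assoc]
    apply Complex.ext
    · rw [exp_ofReal_mul_I_re, one_re, Real.cos_two_mul, Real.cos_sq', hN]; ring
    · rw [exp_ofReal_mul_I_im, one_im, Real.sin_two_mul, hN]; ring
  have hcot : (N : ℂ) / (z - 1) = -(N / 2 * (1 + I * (Real.cot x : ℝ))) := by
    have h1z : 1 - z ≠ 0 := sub_ne_zero.mpr (Ne.symm hz1)
    have hz1' : z - 1 ≠ 0 := sub_ne_zero.mpr hz1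
    rw [ofReal_cot, cot_eq_exp_ratio, ← hz]
    field_simp
    ring
  have := congrArg im (sum_range_natCast_mul_pow_eq_div hzN hz1)
  rw [hcot, im_sum] at this
  simpa only [hz_pow, mul_im, natCast_re, natCast_im, exp_ofReal_mul_I_re, exp_ofReal_mul_I_im,
    neg_im, add_im, one_im, I_re, I_im, ofReal_re, ofReal_im, div_ofNat_re, div_ofNat_im,
    zero_div, zero_mul, mul_zero, add_zero, zero_add, one_mul] using this

theorem sum_range_mul_neg_one_pow_mul_sin_two_mul {x : ℝ} (hx : cos x ≠ 0) {k : ℕ}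
    (hk : sin (2 * k * x) = 0) :
    ∑ a ∈ range (2 * k), a * (-1) ^ a * sin (2 * a * x) = k * tan x := by
  have key := sum_range_mul_sin_two_mul (x := x + π / 2) (N := 2 * k)
    (by rwa [sin_add_pi_div_two])
    (by rw [show ((2 * k : ℕ) : ℝ) * (x + π / 2) = 2 * k * x + k * π by push_cast; ring,
      sin_add_nat_mul_pi, hk, mul_zero])
  have hterm (a : ℕ) : sin (2 * a * (x + π / 2)) = (-1) ^ a * sin (2 * a * x) := by
    rw [← sin_add_nat_mul_pi]
    ring_nf
  have hcot : cot (x + π / 2) = -tan x := by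
    rw [cot_eq_cos_div_sin, cos_add_pi_div_two, sin_add_pi_div_two, tan_eq_sin_div_cos, neg_div]
  simp only [hterm, hcot, ← mul_assoc] at key
  rw [key]
  push_cast
  ring

theorem two_mul_sin_mul_sum_range_cos (y : ℝ) (k : ℕ) :
    2 * sin y * ∑ j ∈ range k, cos ((2 * j + 1) * y) = sin (2 * k * y) := by
  induction k with
  | zero => simp
  | succ k ih =>
    rw [sum_range_succ, mul_add, ih, two_mul_sin_mul_cos,
      show y - (2 * k + 1) * y = -(2 * k * y) by ring,
      show y + (2 * k + 1) * y = 2 * ((k + 1 : ℕ) : ℝ) * y by push_cast; ring, sin_neg]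
    ring

theorem sin_add_sub_sin_sub_mul_cot {x : ℝ} (hx : sin x ≠ 0) (y : ℝ) :
    (sin (y + x) - sin (y - x)) * cot x = cos (y + x) + cos (y - x) := by
  rw [sin_add, sin_sub, cos_add, cos_sub, cot_eq_cos_div_sin]
  field_simp
  ring

theorem Int.add_one_ediv_of_pos {n k : ℤ} (hk : 0 < k) :
    (n + 1) / k = n / k + if k ∣ n + 1 then 1 else 0 := by
  rcases (show k = 1 ∨ 1 < k by omega) with rfl | hk1
  · simp
  · rw [Int.add_ediv_of_pos hk, Int.ediv_eq_zero_of_lt zero_le_one hk1,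
      Int.emod_eq_of_lt zero_le_one hk1, add_zero]
    simp only [Int.le_emod_self_add_one_iff hk]

theorem sin_pi_mul_div_ne_zero {k : ℕ} (hk : k ≠ 0) {n : ℤ} (hn : ¬ (k : ℤ) ∣ n) :
    sin (π * n / k) ≠ 0 := by
  rw [Ne, sin_eq_zero_iff]
  rintro ⟨m, hm⟩
  have hkR : (k : ℝ) ≠ 0 := Nat.cast_ne_zero.mpr hk
  refine hn ⟨m, ?_⟩
  have : (n : ℝ) = k * m := by
    field_simp at hm
    nlinarith [pi_pos]
  exact_mod_cast this

theorem sin_pi_mul_div_two_mul_ne_zero {k : ℕ} (hk : k ≠ 0) {n : ℤ} (hn : Odd n) :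
    sin (π * n / (2 * k)) ≠ 0 := by
  have h := sin_pi_mul_div_ne_zero (k := 2 * k) (by positivity) (n := n) fun hd => by
    push_cast at hd
    exact Int.not_even_iff_odd.mpr hn (even_iff_two_dvd.mpr ((dvd_mul_right 2 (k : ℤ)).trans hd))
  exact_mod_cast h

theorem not_natCast_dvd_mul_of_isCoprime {h : ℤ} {k a : ℕ} (hco : IsCoprime h k) (ha : 0 < a)
    (hak : a < k) : ¬ (k : ℤ) ∣ h * a := fun hd => by
  have := Int.le_of_dvd (by omega) (hco.symm.dvd_of_dvd_mul_left hd)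
  omega

section OddAngle

/-- The paper's angles `π(2j-1)/(2k)`, `1 ≤ j ≤ k`, indexed from `0`. -/
noncomputable def oddAngle (k j : ℕ) : ℝ := π * (2 * j + 1) / (2 * k)

variable {k : ℕ}

theorem sin_oddAngle_ne_zero (hk : k ≠ 0) (j : ℕ) : sin (oddAngle k j) ≠ 0 := by
  simpa [oddAngle] using sin_pi_mul_div_two_mul_ne_zero hk (n := 2 * j + 1) (by simp)

theorem cos_mul_oddAngle_ne_zero (hk : k ≠ 0) {h : ℤ} (hodd : Odd (h + k)) (j : ℕ) :
    cos (h * oddAngle k j) ≠ 0 := by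
  have hodd' : Odd (h * (2 * j + 1) + k) := by
    rw [show h * (2 * j + 1) + k = h + k + 2 * (h * j) by ring]
    exact hodd.add_even (even_two_mul _)
  have := sin_pi_mul_div_two_mul_ne_zero hk hodd'
  rwa [show π * ((h * (2 * j + 1) + k : ℤ) : ℝ) / (2 * k) = h * oddAngle k j + π / 2 by
    unfold oddAngle; push_cast; field_simp, sin_add_pi_div_two] at this

theorem sum_cos_two_mul_oddAngle (hk : 0 < k) (n : ℤ) :
    ∑ j ∈ range k, cos (2 * n * oddAngle k j)
      = if (k : ℤ) ∣ n then (k : ℝ) * (-1) ^ (n / k) else 0 := by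
  have hkR : (k : ℝ) ≠ 0 := by positivity
  have hangle (j : ℕ) : 2 * n * oddAngle k j = (2 * j + 1) * (π * n / k) := by
    unfold oddAngle; field_simp
  simp only [hangle]
  split_ifs with hn
  · obtain ⟨q, rfl⟩ := hn
    have hterm (j : ℕ) : cos ((2 * j + 1) * (π * ((k * q : ℤ) : ℝ) / k)) = (-1) ^ q := by
      rw [show (2 * j + 1) * (π * ((k * q : ℤ) : ℝ) / k) = q * π + (j * q : ℤ) * (2 * π) by
        push_cast; field_simp; ring, cos_add_int_mul_two_pi, cos_int_mul_pi]
    rw [sum_congr rfl fun j _ => hterm j, sum_const, card_range, nsmul_eq_mul,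
      Int.mul_ediv_cancel_left _ (Int.natCast_ne_zero.mpr hk.ne')]
  · have hsin := sin_pi_mul_div_ne_zero hk.ne' hn
    have h := two_mul_sin_mul_sum_range_cos (π * n / k) k
    rw [show 2 * (k : ℝ) * (π * n / k) = (2 * n : ℤ) * π by push_cast; field_simp,
      sin_int_mul_pi] at h
    simpa [hsin] using h

theorem sum_sin_two_mul_oddAngle_mul_cot (hk : 0 < k) (n : ℤ) :
    ∑ j ∈ range k, sin (2 * n * oddAngle k j) * cot (oddAngle k j)
      = if (k : ℤ) ∣ n then 0 else (k : ℝ) * (-1) ^ (n / k) := by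
  let S (n : ℤ) := ∑ j ∈ range k, sin (2 * n * oddAngle k j) * cot (oddAngle k j)
  let C (n : ℤ) := ∑ j ∈ range k, cos (2 * n * oddAngle k j)
  let A (n : ℤ) : ℝ := k * (-1) ^ (n / k)
  have hC (n : ℤ) : C n = if (k : ℤ) ∣ n then A n else 0 := sum_cos_two_mul_oddAngle hk n
  have hS_succ (n : ℤ) : S (n + 1) - S n = C (n + 1) + C n := by
    simp only [S, C, ← sum_sub_distrib, ← sum_add_distrib, ← sub_mul]
    refine sum_congr rfl fun j _ => ?_
    rw [show 2 * ((n + 1 : ℤ) : ℝ) * oddAngle k j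
          = (2 * n + 1) * oddAngle k j + oddAngle k j by push_cast; ring,
      show 2 * (n : ℝ) * oddAngle k j = (2 * n + 1) * oddAngle k j - oddAngle k j by ring]
    exact sin_add_sub_sin_sub_mul_cot (sin_oddAngle_ne_zero hk.ne' j) _
  have hA_succ (n : ℤ) : A (n + 1) - A n = 2 * C (n + 1) := by
    rw [hC]
    simp only [A]
    rw [Int.add_one_ediv_of_pos (by positivity)]
    split_ifs <;> simp [zpow_add₀]
    ring
  have hstep (n : ℤ) : S n = A n - C n ↔ S (n + 1) = A (n + 1) - C (n + 1) := by
    constructor <;> intro <;> linarith [hS_succ n, hA_succ n]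
  have key : S n = A n - C n := by
    induction n using Int.induction_on with
    | zero => simp [S, C, A]
    | succ i ih => exact (hstep i).mp ih
    | pred i ih => exact (hstep (-i - 1)).mpr (by rwa [sub_add_cancel])
  change S n = _
  rw [key, hC]
  split_ifs <;> ring

theorem natCast_mul_tan_mul_oddAngle (hk : k ≠ 0) {h : ℤ} (hodd : Odd (h + k)) (j : ℕ) :
    k * tan (h * oddAngle k j)
      = ∑ a ∈ range (2 * k), a * (-1) ^ a * sin (2 * (h * a : ℤ) * oddAngle k j) := by
  have hsin : sin (2 * k * (h * oddAngle k j)) = 0 := by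
    rw [show 2 * k * (h * oddAngle k j) = (h * (2 * j + 1) : ℤ) * π by
      unfold oddAngle; push_cast; field_simp]
    exact sin_int_mul_pi _
  rw [← sum_range_mul_neg_one_pow_mul_sin_two_mul (cos_mul_oddAngle_ne_zero hk hodd j) hsin]
  refine sum_congr rfl fun a _ => ?_
  push_cast
  ring_nf

theorem sum_tan_mul_cot_oddAngle (hk : 0 < k) {h : ℤ} (hco : IsCoprime h k)
    (hodd : Odd (h + k)) :
    ∑ j ∈ range k, tan (h * oddAngle k j) * cot (oddAngle k j)
      = -(k * ∑ a ∈ Ico 1 k, (-1 : ℝ) ^ ((a : ℤ) + h * a / k)) := by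
  have hk0 : (k : ℤ) ≠ 0 := by positivity
  let s (n : ℤ) : ℝ := if (k : ℤ) ∣ n then 0 else k * (-1) ^ (n / k)
  have hperiod (n : ℤ) : s (n + h * k) = (-1) ^ h * s n := by
    simp only [s, dvd_add_left (dvd_mul_left (k : ℤ) h), Int.add_mul_ediv_right _ _ hk0,
      zpow_add₀ (by norm_num : (-1 : ℝ) ≠ 0)]
    split_ifs <;> ring
  have hsign : (-1 : ℝ) ^ k * (-1) ^ h = -1 := by
    rw [← zpow_natCast, ← zpow_add₀ (by norm_num), add_comm]
    exact hodd.neg_one_zpow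
  have hpair (a : ℕ) :
      a * (-1) ^ a * s (h * a) + ((k + a : ℕ) : ℝ) * (-1) ^ (k + a) * s (h * (k + a : ℕ))
        = -(k * ((-1) ^ a * s (h * a))) := by
    rw [show h * ((k + a : ℕ) : ℤ) = h * a + h * k by push_cast; ring, hperiod, pow_add]
    push_cast
    linear_combination ((k : ℝ) + a) * (-1) ^ a * s (h * a) * hsign
  have hvalue (a : ℕ) (ha : a ∈ Ico 1 k) :
      (-1) ^ a * s (h * a) = k * (-1 : ℝ) ^ ((a : ℤ) + h * a / k) := by
    rw [mem_Ico] at ha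
    simp only [s, if_neg (not_natCast_dvd_mul_of_isCoprime hco ha.1 ha.2),
      zpow_add₀ (by norm_num : (-1 : ℝ) ≠ 0), zpow_natCast]
    ring
  apply mul_left_cancel₀ (show (k : ℝ) ≠ 0 by positivity)
  calc (k : ℝ) * ∑ j ∈ range k, tan (h * oddAngle k j) * cot (oddAngle k j)
      = ∑ a ∈ range (k + k), a * (-1) ^ a * s (h * a) := by
        simp_rw [mul_sum, ← mul_assoc, natCast_mul_tan_mul_oddAngle hk.ne' hodd, sum_mul]
        rw [sum_comm, ← two_mul]
        refine sum_congr rfl fun a _ => ?_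
        simp_rw [mul_assoc _ (sin _), ← mul_sum, sum_sin_two_mul_oddAngle_mul_cot hk]
        rfl
    _ = -(k * ∑ a ∈ range k, (-1) ^ a * s (h * a)) := by
        rw [sum_range_add, ← sum_add_distrib, mul_sum, ← sum_neg_distrib]
        exact sum_congr rfl fun a _ => hpair a
    _ = _ := by
        rw [range_eq_Ico, sum_eq_sum_Ico_succ_bot hk, sum_congr rfl hvalue, ← mul_sum]
        simp [s]

end OddAngle

theorem sum_Icc_one_eq_sum_range_toNat {M : Type*} [AddCommMonoid M] (f : ℤ → M) (n : ℤ) :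
    ∑ j ∈ Icc (1 : ℤ) n, f j = ∑ i ∈ range n.toNat, f (i + 1) := by
  rw [Int.Icc_eq_finset_map, sum_map, add_sub_cancel_right]
  simp [add_comm]

theorem B1_natCast (h : ℤ) (k : ℕ) :
    B1 h k = ∑ a ∈ Ico 1 k, (-1 : ℝ) ^ ((a : ℤ) + h * a / k) * ((h * a / k : ℤ) : ℝ) := by
  rw [B1, sum_Icc_one_eq_sum_range_toNat, sum_Ico_eq_sum_range,
    show ((k : ℤ) - 1).toNat = k - 1 by omega]
  refine sum_congr rfl fun i _ => ?_
  rw [Int.cast_natCast, Int.floor_div_natCast, Int.floor_intCast, add_comm 1 i]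
  push_cast
  rfl

theorem two_mul_B1 {h : ℤ} {k : ℕ} (hco : IsCoprime h k) (hodd : Odd (h + k)) :
    2 * B1 h k = (h - 1) * ∑ a ∈ Ico 1 k, (-1 : ℝ) ^ ((a : ℤ) + h * a / k) := by
  have hreflect (a : ℕ) (ha : a ∈ Ico 1 k) :
      (-1 : ℝ) ^ (((k - a : ℕ) : ℤ) + h * (k - a : ℕ) / k) * ((h * (k - a : ℕ) / k : ℤ) : ℝ)
        = (-1 : ℝ) ^ ((a : ℤ) + h * a / k) * (h - 1 - ((h * a / k : ℤ) : ℝ)) := by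
    rw [mem_Ico] at ha
    have hq : h * ((k - a : ℕ) : ℤ) / k = h - 1 - h * a / k := by
      rw [Nat.cast_sub ha.2.le, show h * ((k : ℤ) - a) = -(h * a) + h * k by ring,
        Int.add_mul_ediv_right _ _ (by omega), Int.neg_ediv,
        if_neg (not_natCast_dvd_mul_of_isCoprime hco ha.1 ha.2),
        Int.sign_natCast_of_ne_zero (by omega)]
      ring
    have hexp : ((k - a : ℕ) : ℤ) + (h - 1 - h * a / k)
        = (a + h * a / k) + ((h + k - 1) - 2 * (a + h * a / k)) := by
      rw [Nat.cast_sub ha.2.le]; ring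
    rw [hq, hexp, zpow_add₀ (by norm_num),
      ((hodd.sub_odd odd_one).sub (even_two_mul _)).neg_one_zpow]
    push_cast
    ring
  have hsum := sum_Ico_reflect
    (fun a : ℕ => (-1 : ℝ) ^ ((a : ℤ) + h * a / k) * ((h * a / k : ℤ) : ℝ)) 1 (Nat.le_succ k)
  rw [Nat.add_sub_cancel_left, Nat.add_sub_cancel, sum_congr rfl hreflect] at hsum
  rw [B1_natCast, two_mul]
  nth_rewrite 2 [← hsum]
  rw [← sum_add_distrib, mul_sum]
  exact sum_congr rfl fun a _ => by ring

theorem stmt_12_general (h k : ℤ) (hk : 0 < k) (hco : IsCoprime h k)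
    (hodd : Odd (h + k)) :
    B1 h k = ((1 - (h : ℝ)) / (2 * (k : ℝ)))
      * ∑ j ∈ Finset.Icc (1 : ℤ) k,
          Real.tan (π * (h : ℝ) * (2 * (j : ℝ) - 1) / (2 * (k : ℝ)))
            * Real.cot (π * (2 * (j : ℝ) - 1) / (2 * (k : ℝ))) := by
  lift k to ℕ using hk.le
  have hsum : ∑ j ∈ Icc (1 : ℤ) k, tan (π * h * (2 * (j : ℝ) - 1) / (2 * (k : ℤ)))
        * cot (π * (2 * (j : ℝ) - 1) / (2 * (k : ℤ)))
      = ∑ j ∈ range k, tan (h * oddAngle k j) * cot (oddAngle k j) := by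
    rw [sum_Icc_one_eq_sum_range_toNat, Int.toNat_natCast]
    refine sum_congr rfl fun j _ => ?_
    unfold oddAngle
    push_cast
    ring_nf
  rw [hsum, sum_tan_mul_cot_oddAngle (by exact_mod_cast hk) hco hodd]
  have hB := two_mul_B1 hco hodd
  have hk0 : (k : ℝ) ≠ 0 := Nat.cast_ne_zero.mpr (by omega)
  push_cast
  field_simp
  linear_combination hB

theorem stmt_12 (h k : ℤ) (hh : 0 < h) (hk : 0 < k) (hco : IsCoprime h k)
    (hodd : Odd (h + k)) :
    B1 h k = ((1 - (h : ℝ)) / (2 * (k : ℝ)))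
      * ∑ j ∈ Finset.Icc (1 : ℤ) k,
          Real.tan (π * (h : ℝ) * (2 * (j : ℝ) - 1) / (2 * (k : ℝ)))
            * Real.cot (π * (2 * (j : ℝ) - 1) / (2 * (k : ℝ))) :=
  stmt_12_general h k hk hco hodd
end

section
/- Let h and k be coprime odd positive integers. Then C₁(h,k) = 1/2 - 1/(2k). -/
/-- The sawtooth function `((x))`: equals `x - ⌊x⌋ - 1/2` if `x` is not an integer,
and `0` if `x` is an integer. -/
def saw (x : ℚ) : ℚ := if x = (⌊x⌋ : ℚ) then 0 else x - ⌊x⌋ - 1/2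

/-- `C₁(h,k) = Σ_{j=1}^{k-1} ((hj/k))·(-1)^{j+⌊hj/k⌋}`. -/
noncomputable def C1 (h k : ℤ) : ℚ :=
  ∑ j ∈ Finset.Icc (1 : ℤ) (k - 1),
    saw (((h * j : ℤ) : ℚ) / (k : ℚ)) * (-1 : ℚ) ^ (j + ⌊((h * j : ℤ) : ℚ) / (k : ℚ)⌋)

/-!
As `h` is invertible modulo `k`, the residue `r = h j mod k` runs over `1, …, k - 1` as `j` does,
and `((h j / k)) = r / k - 1 / 2`. From `h j = k ⌊h j / k⌋ + r` with `h`, `k` odd,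
`j + ⌊h j / k⌋ ≡ r (mod 2)`. Hence `C₁(h, k) = ∑_{r=1}^{k-1} (r / k - 1 / 2) (-1)^r`, in which each
of the `(k - 1) / 2` consecutive pairs `(2i - 1, 2i)` contributes `1 / k`.
-/

open Finset

lemma floor_intCast_div_intCast {n k : ℤ} (hk : 0 < k) : ⌊(n : ℚ) / k⌋ = n / k := by
  lift k to ℕ using hk.le
  exact Rat.floor_intCast_div_natCast n k

lemma saw_eq_fract_sub_half {x : ℚ} (hx : Int.fract x ≠ 0) : saw x = Int.fract x - 1 / 2 := by
  rw [saw, if_neg (fun h => hx (by rw [Int.fract, sub_eq_zero, ← h])), Int.fract]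

lemma saw_intCast_div_of_not_dvd {n k : ℤ} (hk : 0 < k) (hn : ¬ k ∣ n) :
    saw ((n : ℚ) / k) = ((n % k : ℤ) : ℚ) / k - 1 / 2 := by
  lift k to ℕ using hk.le
  have hfract : Int.fract ((n : ℚ) / (k : ℤ)) = ((n % k : ℤ) : ℚ) / (k : ℤ) := by
    rw [Int.cast_natCast, Int.fract_div_intCast_eq_div_intCast_mod]
  have hmod : n % k ≠ 0 := fun h => hn (Int.dvd_of_emod_eq_zero h)
  have hfract_ne : Int.fract ((n : ℚ) / (k : ℤ)) ≠ 0 := by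
    rw [hfract]
    exact div_ne_zero (by exact_mod_cast hmod) (by exact_mod_cast hk.ne')
  rw [saw_eq_fract_sub_half hfract_ne, hfract]

lemma neg_one_zpow_eq_of_even_add {R : Type*} [DivisionRing R] {a b : ℤ} (hab : Even (a + b)) :
    (-1 : R) ^ a = (-1) ^ b := by
  rcases Int.even_or_odd a with ha | ha
  · rw [ha.neg_one_zpow, ((Int.even_add.mp hab).mp ha).neg_one_zpow]
  · have hb : Odd b := Int.not_even_iff_odd.mp fun hb => Int.not_even_iff_odd.mpr ha
      ((Int.even_add.mp hab).mpr hb)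
    rw [ha.neg_one_zpow, hb.neg_one_zpow]

lemma neg_one_zpow_add_mul_ediv {R : Type*} [DivisionRing R] {h k : ℤ} (hh : Odd h) (hk : Odd k)
    (j : ℤ) : (-1 : R) ^ (j + h * j / k) = (-1) ^ (h * j % k) := by
  obtain ⟨p, rfl⟩ := hh
  obtain ⟨q, rfl⟩ := hk
  refine neg_one_zpow_eq_of_even_add ⟨(p + 1) * j - q * ((2 * p + 1) * j / (2 * q + 1)), ?_⟩
  linear_combination Int.mul_ediv_add_emod ((2 * p + 1) * j) (2 * q + 1)

lemma not_dvd_of_mem_Icc_one_sub_one {k j : ℤ} (hj : j ∈ Icc 1 (k - 1)) : ¬ k ∣ j := by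
  rw [mem_Icc] at hj
  exact fun hdvd => absurd (Int.le_of_dvd (by omega) hdvd) (by omega)

lemma mul_emod_mem_Icc_one_sub_one {h k j : ℤ} (hco : IsCoprime h k) (hk : 0 < k)
    (hj : j ∈ Icc 1 (k - 1)) : h * j % k ∈ Icc 1 (k - 1) := by
  have hndvd : ¬ k ∣ h * j := fun hdvd => not_dvd_of_mem_Icc_one_sub_one hj
    (hco.symm.dvd_of_dvd_mul_left hdvd)
  have hpos := (Int.emod_pos_of_not_dvd hndvd).resolve_left hk.ne'
  have hlt := Int.emod_lt_of_pos (h * j) hk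
  rw [mem_Icc]
  omega

lemma mul_mul_emod_emod_of_modEq_one {a h k j : ℤ} (hinv : a * h ≡ 1 [ZMOD k])
    (hj : j ∈ Icc 1 (k - 1)) : a * (h * j % k) % k = j := by
  rw [mem_Icc] at hj
  have hmod : a * (h * j % k) ≡ j [ZMOD k] :=
    calc a * (h * j % k) ≡ a * (h * j) [ZMOD k] := (Int.mod_modEq _ _).mul_left a
      _ = (a * h) * j := by ring
      _ ≡ 1 * j [ZMOD k] := hinv.mul_right j
      _ = j := one_mul j
  rw [hmod, Int.emod_eq_of_lt (by omega) (by omega)]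

lemma sum_Icc_comp_mul_emod {M : Type*} [AddCommMonoid M] (f : ℤ → M) {h k : ℤ}
    (hco : IsCoprime h k) (hk : 0 < k) :
    ∑ j ∈ Icc 1 (k - 1), f (h * j % k) = ∑ r ∈ Icc 1 (k - 1), f r := by
  obtain ⟨a, b, hab⟩ := hco
  have hinv : ∀ {u v : ℤ}, u * v + b * k = 1 → u * v ≡ 1 [ZMOD k] := fun huv =>
    Int.modEq_iff_dvd.mpr ⟨b, by linear_combination -huv⟩
  exact sum_nbij' (fun j => h * j % k) (fun r => a * r % k)
    (fun _ hj => mul_emod_mem_Icc_one_sub_one ⟨a, b, hab⟩ hk hj)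
    (fun _ hr => mul_emod_mem_Icc_one_sub_one ⟨h, b, by linear_combination hab⟩ hk hr)
    (fun _ hj => mul_mul_emod_emod_of_modEq_one (hinv hab) hj)
    (fun _ hr => mul_mul_emod_emod_of_modEq_one (hinv (by linear_combination hab)) hr)
    (fun _ _ => rfl)

lemma sum_Icc_two_mul_div_sub_half_mul_neg_one_zpow {K : Type*} [Field K] (c : K) {m : ℤ}
    (hm : 0 ≤ m) : ∑ r ∈ Icc 1 (2 * m), ((r : K) / c - 1 / 2) * (-1) ^ r = m / c := by
  induction m, hm using Int.leInduction with
  | base => simp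
  | succ n hn ih =>
    rw [show 2 * (n + 1) = 2 * n + 1 + 1 by ring,
      ← insert_Icc_right_eq_Icc_add_one (by omega), sum_insert (by simp),
      ← insert_Icc_right_eq_Icc_add_one (by omega), sum_insert (by simp), ih,
      (show Even (2 * n + 1 + 1) from ⟨n + 1, by ring⟩).neg_one_zpow,
      (odd_two_mul_add_one n).neg_one_zpow]
    push_cast
    ring

lemma C1_term_eq_of_mem_Icc {h k j : ℤ} (hk : 0 < k) (hco : IsCoprime h k) (hho : Odd h)
    (hko : Odd k) (hj : j ∈ Icc 1 (k - 1)) :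
    saw (((h * j : ℤ) : ℚ) / k) * (-1 : ℚ) ^ (j + ⌊((h * j : ℤ) : ℚ) / k⌋) =
      (((h * j % k : ℤ) : ℚ) / k - 1 / 2) * (-1) ^ (h * j % k) := by
  have hndvd : ¬ k ∣ h * j := fun hdvd => not_dvd_of_mem_Icc_one_sub_one hj
    (hco.symm.dvd_of_dvd_mul_left hdvd)
  rw [saw_intCast_div_of_not_dvd hk hndvd, floor_intCast_div_intCast hk,
    neg_one_zpow_add_mul_ediv hho hko]

theorem stmt_18_general (h k : ℤ) (hk : 0 < k) (hco : IsCoprime h k)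
    (hho : Odd h) (hko : Odd k) :
    C1 h k = 1 / 2 - 1 / (2 * (k : ℚ)) := by
  have hresidues : C1 h k = ∑ r ∈ Icc 1 (k - 1), ((r : ℚ) / k - 1 / 2) * (-1) ^ r := by
    rw [C1, ← sum_Icc_comp_mul_emod (fun r : ℤ => ((r : ℚ) / k - 1 / 2) * (-1) ^ r) hco hk]
    exact sum_congr rfl fun j hj => C1_term_eq_of_mem_Icc hk hco hho hko hj
  obtain ⟨q, hq⟩ := hko
  have hkQ : (k : ℚ) ≠ 0 := by exact_mod_cast hk.ne'
  have hqk : (q : ℚ) = (k - 1) / 2 := by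
    rw [hq]
    push_cast
    ring
  rw [hresidues, show k - 1 = 2 * q by omega,
    sum_Icc_two_mul_div_sub_half_mul_neg_one_zpow _ (by omega : 0 ≤ q), hqk]
  field_simp

theorem stmt_18 (h k : ℤ) (hh : 0 < h) (hk : 0 < k) (hco : IsCoprime h k)
    (hho : Odd h) (hko : Odd k) :
    C1 h k = 1 / 2 - 1 / (2 * (k : ℚ)) :=
  stmt_18_general h k hk hco hho hko
end
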